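/- Let γ ∈ (0,1), let (r_k)_{k∈ℤ} be bounded by R (|r_k| ≤ R), and let D be a random variable on {0,...,n-1}. Then |E_D[∑_{k≥t} γ^{k-t} r_{k-D}] − ∑_{k≥t} γ^{k-t} r_k| ≤ 2R·(1 − E[γ^D])/(1−γ). -/

import Mathlib

/-!
Write `V = ∑' k, γ ^ k * r (t + k)` for the undelayed return. Splitting off the first `d` terms,
the return delayed by `d` is a finite history sum of at most `R (1 - γ ^ d) / (1 - γ)` in absolute
value plus `γ ^ d * V`, and `|V| ≤ R / (1 - γ)`; so it differs from `V` by at most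
`2 R (1 - γ ^ d) / (1 - γ)`. This bound is affine in `γ ^ d`, hence survives averaging over `d`.
-/

open Finset

section Geometric

variable {γ R : ℝ} {f : ℕ → ℝ}

theorem abs_pow_mul_le (hγ : 0 ≤ γ) (hf : ∀ k, |f k| ≤ R) (k : ℕ) :
    |γ ^ k * f k| ≤ R * γ ^ k := by
  rw [abs_mul, abs_pow, abs_of_nonneg hγ, mul_comm]
  exact mul_le_mul_of_nonneg_right (hf k) (pow_nonneg hγ k)

theorem summable_pow_mul_of_abs_le (hγ0 : 0 ≤ γ) (hγ1 : γ < 1) (hf : ∀ k, |f k| ≤ R) :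
    Summable fun k => γ ^ k * f k :=
  .of_norm_bounded ((summable_geometric_of_lt_one hγ0 hγ1).mul_left R) (abs_pow_mul_le hγ0 hf)

theorem abs_tsum_pow_mul_le (hγ0 : 0 ≤ γ) (hγ1 : γ < 1) (hf : ∀ k, |f k| ≤ R) :
    |∑' k, γ ^ k * f k| ≤ R / (1 - γ) := by
  rw [div_eq_mul_inv]
  exact tsum_of_norm_bounded (f := fun k => γ ^ k * f k)
    ((hasSum_geometric_of_lt_one hγ0 hγ1).mul_left R) (abs_pow_mul_le hγ0 hf)

theorem abs_sum_range_pow_mul_le (hγ0 : 0 ≤ γ) (hγ1 : γ < 1) (hf : ∀ k, |f k| ≤ R) (d : ℕ) :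
    |∑ k ∈ range d, γ ^ k * f k| ≤ R * (1 - γ ^ d) / (1 - γ) := by
  calc |∑ k ∈ range d, γ ^ k * f k|
      ≤ ∑ k ∈ range d, R * γ ^ k := abs_sum_le_sum_abs _ _ |>.trans <|
        sum_le_sum fun k _ => abs_pow_mul_le hγ0 hf k
    _ = R * (1 - γ ^ d) / (1 - γ) := by
        rw [← mul_sum, geom_sum_eq hγ1.ne, mul_div_assoc, ← neg_div_neg_eq]
        simp only [neg_sub]

theorem tsum_pow_mul_eq_sum_range_add (hs : Summable fun k => γ ^ k * f k) (d : ℕ) :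
    ∑' k, γ ^ k * f k = ∑ k ∈ range d, γ ^ k * f k + γ ^ d * ∑' k, γ ^ k * f (k + d) := by
  rw [← hs.sum_add_tsum_nat_add d, ← tsum_mul_left]
  simp only [pow_add, mul_comm, mul_left_comm]

theorem abs_tsum_pow_mul_sub_tsum_shift_le (hγ0 : 0 ≤ γ) (hγ1 : γ < 1)
    (hf : ∀ k, |f k| ≤ R) (d : ℕ) :
    |∑' k, γ ^ k * f k - ∑' k, γ ^ k * f (k + d)| ≤ 2 * R / (1 - γ) * (1 - γ ^ d) := by
  have hd : 0 ≤ 1 - γ ^ d := sub_nonneg.2 (pow_le_one₀ hγ0 hγ1.le)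
  have hsplit := tsum_pow_mul_eq_sum_range_add (summable_pow_mul_of_abs_le hγ0 hγ1 hf) d
  set V := ∑' k, γ ^ k * f (k + d)
  have hV : |V| ≤ R / (1 - γ) := abs_tsum_pow_mul_le hγ0 hγ1 fun k => hf (k + d)
  calc |∑' k, γ ^ k * f k - V|
      = |∑ k ∈ range d, γ ^ k * f k + (1 - γ ^ d) * -V| := by
        rw [hsplit]; congr 1; ring
    _ ≤ R * (1 - γ ^ d) / (1 - γ) + (1 - γ ^ d) * (R / (1 - γ)) := by
        refine (abs_add_le _ _).trans (add_le_add (abs_sum_range_pow_mul_le hγ0 hγ1 hf d) ?_)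
        rw [abs_mul, abs_of_nonneg hd, abs_neg]
        exact mul_le_mul_of_nonneg_left hV hd
    _ = 2 * R / (1 - γ) * (1 - γ ^ d) := by ring

end Geometric

theorem abs_sum_mul_sub_le_of_abs_sub_le {ι : Type*} {s : Finset ι} {μ x y : ι → ℝ} {b c : ℝ}
    (hμ : ∀ i ∈ s, 0 ≤ μ i) (hμ1 : ∑ i ∈ s, μ i = 1) (h : ∀ i ∈ s, |x i - b| ≤ c * (1 - y i)) :
    |∑ i ∈ s, μ i * x i - b| ≤ c * (1 - ∑ i ∈ s, μ i * y i) := by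
  have hb : ∑ i ∈ s, μ i * x i - b = ∑ i ∈ s, μ i * (x i - b) := by
    simp only [mul_sub, sum_sub_distrib, ← sum_mul, hμ1, one_mul]
  have hc : c * (1 - ∑ i ∈ s, μ i * y i) = ∑ i ∈ s, μ i * (c * (1 - y i)) := by
    simp only [mul_sub, mul_one, sum_sub_distrib, ← sum_mul, hμ1, one_mul,
      mul_left_comm (μ _) c, ← mul_sum]
  rw [hb, hc]
  refine (abs_sum_le_sum_abs _ _).trans (sum_le_sum fun i hi => ?_)
  rw [abs_mul, abs_of_nonneg (hμ i hi)]
  exact mul_le_mul_of_nonneg_left (h i hi) (hμ i hi)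

theorem delayed_return_error_bound {n : ℕ} (γ : ℝ)
    (hγ : γ ∈ Set.Ioo (0 : ℝ) 1) (t : ℤ) (r : ℤ → ℝ) (R : ℝ)
    (hR : ∀ k, |r k| ≤ R)
    (μ : Fin n → ℝ) (hμ : ∀ i, 0 ≤ μ i) (hμ1 : ∑ i, μ i = 1) :
    |(∑ i, μ i * ∑' k : ℕ, γ ^ k * r (t + k - (i : ℕ))) -
        ∑' k : ℕ, γ ^ k * r (t + k)| ≤
      2 * R * (1 - ∑ i, μ i * γ ^ (i : ℕ)) / (1 - γ) := by
  rw [mul_div_right_comm]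
  refine abs_sum_mul_sub_le_of_abs_sub_le (fun i _ => hμ i) hμ1 fun i _ => ?_
  have hshift : ∀ k : ℕ, t + ↑(k + (i : ℕ)) - (i : ℕ) = t + k := fun k => by push_cast; ring
  simpa only [hshift] using
    abs_tsum_pow_mul_sub_tsum_shift_le hγ.1.le hγ.2 (fun k => hR (t + k - (i : ℕ))) i
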